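/- arXiv:0911.1019 — 3 statements merged into one kernel-verified Lean document; each statement's English description precedes it below -/
import Mathlib

section
/- Let M > 0 and c < d be real numbers, and let a ∈ L¹(c,d) satisfy a(x) ≥ M for a.e. x ∈ (c,d). Suppose u : [c,d] → ℝ is a nontrivial solution of u''(x) + a(x)u(x) = 0 on (c,d) with u > 0 on (c,d) and either (u(c) = 0 and u'(d) = 0) or (u'(c) = 0 and u(d) = 0). Then d − c ≤ π/(2√M). If moreover a(x) > M on a subset of (c,d) of positive measure, then d − c < π/(2√M). -/
/-!
Sturm comparison with `w x = sin (√M * (x - e))`, which solves `w'' + M w = 0`. The Wronskian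
`W = u w' - v w` is absolutely continuous with `W' = (a - M) u w` a.e., so
`W q - W p = ∫_p^q (a - M) u w`, which is nonnegative while `u, w ≥ 0`, and positive on `(c, d)`
when `a > M` on a set of positive measure. If `d - c > π / (2√M)`, a quarter sine wave ending at
`d` (when `v d = 0`) or starting at `c` with `w' c = 0` (when `v c = 0`) gives
`W q - W p = -√M u x₀ < 0` at an interior point `x₀`. If `d - c = π / (2√M)`, the same choice on
all of `[c, d]` makes both boundary values of `W` vanish, contradicting strict positivity.
-/

open MeasureTheory Set Real

/-- `u` is a solution of `u'' + a·u = 0` on `[c,d]`, with derivative function `v`: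
`u` is continuously differentiable with derivative `v`, and `v` satisfies the
integral equation `v x = v c - ∫_c^x a·u` (so `v` is absolutely continuous and
`u'' = -a·u` a.e.). -/
def IsSolOn (a u v : ℝ → ℝ) (c d : ℝ) : Prop :=
  (∀ x ∈ Set.Icc c d, HasDerivWithinAt u (v x) (Set.Icc c d) x) ∧
  (∀ x ∈ Set.Icc c d, v x = v c - ∫ t in c..x, a t * u t)

open intervalIntegral

theorem AbsolutelyContinuousOnInterval.congr {f g : ℝ → ℝ} {a b : ℝ}
    (hf : AbsolutelyContinuousOnInterval f a b) (hfg : EqOn f g (uIcc a b)) :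
    AbsolutelyContinuousOnInterval g a b := by
  refine Filter.Tendsto.congr' ?_ hf
  filter_upwards [Filter.mem_inf_of_right (Filter.mem_principal_self _)] with E hE
  obtain ⟨hmem, -⟩ := hE
  exact Finset.sum_congr rfl fun i hi => by rw [hfg (hmem i hi).1, hfg (hmem i hi).2]

theorem absolutelyContinuousOnInterval_of_hasDerivAt {f f' : ℝ → ℝ} {a b : ℝ}
    (hf : ∀ x, HasDerivAt f (f' x) x) (hf' : Continuous f') :
    AbsolutelyContinuousOnInterval f a b := by
  have hderiv : deriv f = f' := funext fun x => (hf x).deriv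
  exact (contDiff_one_iff_deriv.2 ⟨fun x => (hf x).differentiableAt, hderiv ▸ hf'⟩).contDiffOn
    |>.absolutelyContinuousOnInterval

theorem hasDerivAt_sin_mul_sub (s e x : ℝ) :
    HasDerivAt (fun x => sin (s * (x - e))) (s * cos (s * (x - e))) x := by
  simpa [mul_comm] using ((hasDerivAt_id x).sub_const e |>.const_mul s).sin

theorem hasDerivAt_mul_cos_mul_sub (s e x : ℝ) :
    HasDerivAt (fun x => s * cos (s * (x - e))) (-(s ^ 2 * sin (s * (x - e)))) x :=
  ((((hasDerivAt_id' x).sub_const e).const_mul s).cos.const_mul s).congr_deriv (by ring)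

theorem sin_mul_sub_pos {s e x : ℝ} (hs : 0 < s) (hx : x ∈ Ioo e (e + π / s)) :
    0 < sin (s * (x - e)) := by
  have hlt : s * (x - e) < π := by
    have := hx.2
    rw [← lt_div_iff₀' hs]
    linarith
  exact sin_pos_of_pos_of_lt_pi (mul_pos hs (sub_pos.2 hx.1)) hlt

section Comparison

variable {M c d : ℝ} {a u w : ℝ → ℝ}

theorem ae_restrict_sub_mul_mul_nonneg (haM : ∀ᵐ x ∂(volume.restrict (Ioo c d)), M ≤ a x)
    (hpos : ∀ x ∈ Ioo c d, 0 < u x) {p q : ℝ} (hp : c ≤ p) (hq : q ≤ d)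
    (hw : ∀ x ∈ Ioo p q, 0 ≤ w x) :
    0 ≤ᵐ[volume.restrict (Ioo p q)] fun x => (a x - M) * u x * w x := by
  filter_upwards [ae_restrict_of_ae_restrict_of_subset (Ioo_subset_Ioo hp hq) haM,
    ae_restrict_mem measurableSet_Ioo] with x hax hx
  have := hpos x (Ioo_subset_Ioo hp hq hx)
  have := hw x hx
  have := sub_nonneg.2 hax
  positivity

theorem integral_sub_mul_mul_nonneg (haM : ∀ᵐ x ∂(volume.restrict (Ioo c d)), M ≤ a x)
    (hpos : ∀ x ∈ Ioo c d, 0 < u x) {p q : ℝ} (hp : c ≤ p) (hpq : p ≤ q) (hq : q ≤ d)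
    (hw : ∀ x ∈ Ioo p q, 0 ≤ w x) :
    0 ≤ ∫ x in p..q, (a x - M) * u x * w x := by
  rw [integral_of_le hpq, integral_Ioc_eq_integral_Ioo]
  exact setIntegral_nonneg_of_ae_restrict (ae_restrict_sub_mul_mul_nonneg haM hpos hp hq hw)

theorem integral_sub_mul_mul_pos (ha : IntegrableOn a (Icc c d))
    (haM : ∀ᵐ x ∂(volume.restrict (Ioo c d)), M ≤ a x) (hmeas : 0 < volume {x ∈ Ioo c d | M < a x})
    (hu : ContinuousOn u (Icc c d)) (hpos : ∀ x ∈ Ioo c d, 0 < u x)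
    (hw : Continuous w) (hwpos : ∀ x ∈ Ioo c d, 0 < w x) (hcd : c ≤ d) :
    0 < ∫ x in c..d, (a x - M) * u x * w x := by
  have hint : IntegrableOn (fun x => (a x - M) * u x * w x) (Ioo c d) := by
    simp_rw [mul_assoc]
    exact ((ha.sub (integrableOn_const measure_Icc_lt_top.ne)).mul_continuousOn
      (hu.mul hw.continuousOn) isCompact_Icc).mono_set Ioo_subset_Icc_self
  rw [integral_of_le hcd, integral_Ioc_eq_integral_Ioo, setIntegral_pos_iff_support_of_nonneg_ae
    (ae_restrict_sub_mul_mul_nonneg haM hpos le_rfl le_rfl fun x hx => (hwpos x hx).le) hint]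
  refine hmeas.trans_le (measure_mono fun x ⟨hx, hax⟩ => ⟨?_, hx⟩)
  have := hpos x hx
  have := hwpos x hx
  have := sub_pos.2 hax
  exact (by positivity : 0 < (a x - M) * u x * w x).ne'

end Comparison

namespace IsSolOn

variable {M c d : ℝ} {a u v : ℝ → ℝ}

theorem continuousOn (hsol : IsSolOn a u v c d) : ContinuousOn u (Icc c d) :=
  fun x hx => (hsol.1 x hx).continuousWithinAt

theorem intervalIntegrable_mul (hsol : IsSolOn a u v c d) (hcd : c ≤ d)
    (ha : IntegrableOn a (Icc c d)) : IntervalIntegrable (fun t => a t * u t) volume c d :=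
  (intervalIntegrable_iff_integrableOn_Icc_of_le hcd).2 <|
    ha.mul_continuousOn hsol.continuousOn isCompact_Icc

theorem absolutelyContinuousOnInterval_deriv (hsol : IsSolOn a u v c d) (hcd : c ≤ d)
    (ha : IntegrableOn a (Icc c d)) : AbsolutelyContinuousOnInterval v c d := by
  refine AbsolutelyContinuousOnInterval.congr ?_ fun x hx => (hsol.2 x ?_).symm
  · exact (absolutelyContinuousOnInterval_of_hasDerivAt (fun _ => hasDerivAt_const _ (v c))
      continuous_const).fun_sub <|
      (hsol.intervalIntegrable_mul hcd ha).absolutelyContinuousOnInterval_intervalIntegral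
        left_mem_uIcc
  · rwa [uIcc_of_le hcd] at hx

theorem absolutelyContinuousOnInterval (hsol : IsSolOn a u v c d) (hcd : c ≤ d)
    (ha : IntegrableOn a (Icc c d)) : AbsolutelyContinuousOnInterval u c d := by
  have hv := (hsol.absolutelyContinuousOnInterval_deriv hcd ha).continuousOn
  rw [uIcc_of_le hcd] at hv
  obtain ⟨C, hC⟩ := isCompact_Icc.exists_bound_of_continuousOn hv
  have hLip : LipschitzOnWith C.toNNReal u (Icc c d) :=
    (convex_Icc c d).lipschitzOnWith_of_nnnorm_hasDerivWithin_le hsol.1 fun x hx => by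
      rw [← NNReal.coe_le_coe, coe_nnnorm]
      exact (hC x hx).trans (le_coe_toNNReal C)
  rw [← uIcc_of_le hcd] at hLip
  exact hLip.absolutelyContinuousOnInterval

theorem ae_hasDerivAt_deriv (hsol : IsSolOn a u v c d) (hcd : c ≤ d)
    (ha : IntegrableOn a (Icc c d)) :
    ∀ᵐ x, x ∈ Ioo c d → HasDerivAt v (-(a x * u x)) x := by
  filter_upwards [(hsol.intervalIntegrable_mul hcd ha).ae_hasDerivAt_integral] with x hx hxI
  have hxI' : x ∈ uIcc c d := by
    rw [uIcc_of_le hcd]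
    exact Ioo_subset_Icc_self hxI
  refine ((hx hxI' c left_mem_uIcc).const_sub (v c)).congr_of_eventuallyEq ?_
  filter_upwards [Icc_mem_nhds hxI.1 hxI.2] with y hy using hsol.2 y hy

theorem wronskian_sub (hsol : IsSolOn a u v c d) (ha : IntegrableOn a (Icc c d))
    {w w' : ℝ → ℝ} (hw : ∀ x, HasDerivAt w (w' x) x) (hw' : ∀ x, HasDerivAt w' (-(M * w x)) x)
    {p q : ℝ} (hp : c ≤ p) (hpq : p ≤ q) (hq : q ≤ d) :
    (u q * w' q - v q * w q) - (u p * w' p - v p * w p) =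
      ∫ x in p..q, (a x - M) * u x * w x := by
  have hcd : c ≤ d := hp.trans (hpq.trans hq)
  have hwc : Continuous w := continuous_iff_continuousAt.2 fun x => (hw x).continuousAt
  have hw'c : Continuous w' := continuous_iff_continuousAt.2 fun x => (hw' x).continuousAt
  have hW : AbsolutelyContinuousOnInterval (fun x => u x * w' x - v x * w x) p q :=
    (((hsol.absolutelyContinuousOnInterval hcd ha).fun_mul
      (absolutelyContinuousOnInterval_of_hasDerivAt hw' (hwc.const_mul M).neg)).fun_sub
      ((hsol.absolutelyContinuousOnInterval_deriv hcd ha).fun_mul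
        (absolutelyContinuousOnInterval_of_hasDerivAt hw hw'c))).mono
      (uIcc_subset_uIcc (mem_uIcc_of_le hp (hpq.trans hq)) (mem_uIcc_of_le (hp.trans hpq) hq))
  refine hW.integral_deriv_eq_sub.symm.trans (integral_congr_ae ?_)
  filter_upwards [hsol.ae_hasDerivAt_deriv hcd ha, Measure.ae_ne volume q] with x hv hxq hx
  rw [uIoc_of_le hpq] at hx
  have hxI : x ∈ Ioo c d := ⟨hp.trans_lt hx.1, (lt_of_le_of_ne hx.2 hxq).trans_le hq⟩
  have hu : HasDerivAt u (v x) x :=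
    (hsol.1 x (Ioo_subset_Icc_self hxI)).hasDerivAt (Icc_mem_nhds hxI.1 hxI.2)
  rw [((hu.fun_mul (hw' x)).fun_sub ((hv hxI).fun_mul (hw x))).deriv]
  ring

theorem sin_wronskian_sub (hsol : IsSolOn a u v c d) (ha : IntegrableOn a (Icc c d))
    (hM : 0 ≤ M) (e : ℝ) {p q : ℝ} (hp : c ≤ p) (hpq : p ≤ q) (hq : q ≤ d) :
    (u q * (√M * cos (√M * (q - e))) - v q * sin (√M * (q - e))) -
        (u p * (√M * cos (√M * (p - e))) - v p * sin (√M * (p - e))) =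
      ∫ x in p..q, (a x - M) * u x * sin (√M * (x - e)) :=
  hsol.wronskian_sub ha (hasDerivAt_sin_mul_sub √M e)
    (fun x => by simpa only [sq_sqrt hM] using hasDerivAt_mul_cos_mul_sub √M e x) hp hpq hq

theorem sub_le_pi_div (hsol : IsSolOn a u v c d) (ha : IntegrableOn a (Icc c d)) (hM : 0 < M)
    (haM : ∀ᵐ x ∂(volume.restrict (Ioo c d)), M ≤ a x) (hpos : ∀ x ∈ Ioo c d, 0 < u x)
    (hv : v d = 0 ∨ v c = 0) :
    d - c ≤ π / (2 * √M) := by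
  set L := π / (2 * √M) with hL
  have hs : 0 < √M := sqrt_pos.2 hM
  have hsL : √M * L = π / 2 := by rw [hL]; field_simp
  have hπL : π / √M = 2 * L := by rw [hL]; field_simp
  have hL0 : 0 < L := by positivity
  by_contra! hlt
  rcases hv with hvd | hvc
  · have key := hsol.sin_wronskian_sub ha hM.le (d - L) (p := d - L) (q := d)
      (by linarith) (by linarith) le_rfl
    have hint := integral_sub_mul_mul_nonneg (w := fun x => sin (√M * (x - (d - L))))
      haM hpos (p := d - L) (by linarith) (by linarith) le_rfl fun x hx =>
        (sin_mul_sub_pos hs ⟨hx.1, by linarith [hx.2]⟩).le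
    rw [show d - (d - L) = L by ring, sub_self, hsL] at key
    simp only [cos_pi_div_two, sin_pi_div_two, mul_zero, cos_zero, sin_zero, hvd] at key
    have := hpos (d - L) ⟨by linarith, by linarith⟩
    nlinarith
  · have key := hsol.sin_wronskian_sub ha hM.le (c - L) (q := c + L) le_rfl
      (by linarith) (by linarith)
    have hint := integral_sub_mul_mul_nonneg (w := fun x => sin (√M * (x - (c - L))))
      haM hpos (p := c) (q := c + L) le_rfl (by linarith) (by linarith) fun x hx =>
        (sin_mul_sub_pos hs ⟨by linarith [hx.1], by linarith [hx.2]⟩).le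
    rw [show c + L - (c - L) = 2 * L by ring, show c - (c - L) = L by ring, hsL,
      show √M * (2 * L) = π by linarith] at key
    simp only [cos_pi_div_two, sin_pi_div_two, cos_pi, sin_pi, mul_zero, hvc] at key
    have := hpos (c + L) ⟨by linarith, by linarith⟩
    nlinarith

theorem sub_ne_pi_div (hsol : IsSolOn a u v c d) (ha : IntegrableOn a (Icc c d)) (hM : 0 < M)
    (haM : ∀ᵐ x ∂(volume.restrict (Ioo c d)), M ≤ a x) (hpos : ∀ x ∈ Ioo c d, 0 < u x)
    (hbc : (u c = 0 ∧ v d = 0) ∨ (v c = 0 ∧ u d = 0))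
    (hmeas : 0 < volume {x ∈ Ioo c d | M < a x}) :
    d - c ≠ π / (2 * √M) := by
  set L := π / (2 * √M) with hL
  have hs : 0 < √M := sqrt_pos.2 hM
  have hsL : √M * L = π / 2 := by rw [hL]; field_simp
  have hπL : π / √M = 2 * L := by rw [hL]; field_simp
  have hL0 : 0 < L := by positivity
  intro hdc
  have hint (e : ℝ) (he : c - L ≤ e) (he' : e ≤ c) :
      0 < ∫ x in c..d, (a x - M) * u x * sin (√M * (x - e)) :=
    integral_sub_mul_mul_pos ha haM hmeas hsol.continuousOn hpos (by fun_prop)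
      (fun x hx => sin_mul_sub_pos hs ⟨by linarith [hx.1], by linarith [hx.2]⟩) (by linarith)
  rcases hbc with ⟨huc, hvd⟩ | ⟨hvc, hud⟩
  · have key := hsol.sin_wronskian_sub ha hM.le c le_rfl (by linarith) le_rfl
    rw [hdc, sub_self, hsL] at key
    simp only [cos_pi_div_two, sin_pi_div_two, sin_zero, mul_zero, hvd, huc] at key
    linarith [hint c (by linarith) le_rfl]
  · have key := hsol.sin_wronskian_sub ha hM.le (c - L) le_rfl (by linarith) le_rfl
    rw [show d - (c - L) = 2 * L by linarith, show c - (c - L) = L by ring, hsL,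
      show √M * (2 * L) = π by linarith] at key
    simp only [cos_pi_div_two, sin_pi_div_two, sin_pi, mul_zero, hvc, hud] at key
    linarith [hint (c - L) le_rfl (by linarith)]

end IsSolOn

theorem stmt0_general (M c d : ℝ) (hM : 0 < M)
    (a u v : ℝ → ℝ)
    (ha : IntegrableOn a (Set.Ioo c d))
    (haM : ∀ᵐ x ∂(volume.restrict (Set.Ioo c d)), M ≤ a x)
    (hsol : IsSolOn a u v c d)
    (hpos : ∀ x ∈ Set.Ioo c d, 0 < u x)
    (hbc : (u c = 0 ∧ v d = 0) ∨ (v c = 0 ∧ u d = 0)) :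
    d - c ≤ Real.pi / (2 * Real.sqrt M) ∧
      (0 < volume {x ∈ Set.Ioo c d | M < a x} →
        d - c < Real.pi / (2 * Real.sqrt M)) := by
  have haI : IntegrableOn a (Icc c d) := (integrableOn_Icc_iff_integrableOn_Ioo).2 ha
  have hle := hsol.sub_le_pi_div haI hM haM hpos (hbc.imp And.right And.left)
  exact ⟨hle, fun hmeas => hle.lt_of_ne (hsol.sub_ne_pi_div haI hM haM hpos hbc hmeas)⟩

theorem stmt0 (M c d : ℝ) (hM : 0 < M) (hcd : c < d)
    (a u v : ℝ → ℝ)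
    (ha : IntegrableOn a (Set.Ioo c d))
    (haM : ∀ᵐ x ∂(volume.restrict (Set.Ioo c d)), M ≤ a x)
    (hsol : IsSolOn a u v c d)
    (hnt : ∃ x ∈ Set.Icc c d, u x ≠ 0)
    (hpos : ∀ x ∈ Set.Ioo c d, 0 < u x)
    (hbc : (u c = 0 ∧ v d = 0) ∨ (v c = 0 ∧ u d = 0)) :
    d - c ≤ Real.pi / (2 * Real.sqrt M) ∧
      (0 < volume {x ∈ Set.Ioo c d | M < a x} →
        d - c < Real.pi / (2 * Real.sqrt M)) :=
  stmt0_general M c d hM a u v ha haM hsol hpos hbc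
end

section
/- Let a < b and 0 < M ≤ π²/(4(b−a)²) be given real numbers, and set c = √M · cot(√M (b−a)). Then for every continuously differentiable function u : [a,b] → ℝ with u(a) = 0 and u(b) ≠ 0 one has ∫_a^b u'(x)² dx − M ∫_a^b u(x)² dx ≥ c · u(b)², and equality holds if and only if u(x) = k · sin(√M (x−a)) / sin(√M (b−a)) for some nonzero constant k. -/
open MeasureTheory Set Real

/-! Write `s = √M`, so that `θ = s (b - a) ≤ π / 2`, and let `w = u(b) sin (s (x - a)) / sin θ`:
it solves `w'' = -M w` with `w(a) = 0` and `w(b) = u(b)`. For the quadratic form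
`Q(f) = ∫ f'² - M f²`, integrating `(w' z)' = w' z' - M w z` for `z = u - w`, which vanishes at
both ends, gives `Q(u) = Q(w) + Q(z)`, and `Q(w) = √M cot θ · u(b)²`.

It remains to see `Q(z) ≥ 0` with equality only for `z = 0`. The function
`g = -s tan (s (x - (a + b) / 2))` is a bounded solution of the Riccati equation `g' = -(M + g²)`
on `[a, b]`, so `(g z²)' = z'² - M z² - (z' - g z)²` and `Q(z) = ∫ (z' - g z)² ≥ 0`. Since this
works for every `s` with `s (b - a) < π`, applying it with a slightly larger `s` shows that
`Q(z) = 0` forces `∫ z² = 0`. -/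

theorem hasDerivAt_mul_sub (s m x : ℝ) : HasDerivAt (fun y => s * (y - m)) s x := by
  simpa using ((hasDerivAt_id x).sub_const m).const_mul s

theorem hasDerivAt_neg_mul_tan {s m x : ℝ} (hx : cos (s * (x - m)) ≠ 0) :
    HasDerivAt (fun y => -s * tan (s * (y - m))) (-(s ^ 2 + (-s * tan (s * (x - m))) ^ 2)) x := by
  refine (((hasDerivAt_tan hx).comp x (hasDerivAt_mul_sub s m x)).const_mul (-s)).congr_deriv ?_
  rw [tan_eq_sin_div_cos]
  field_simp
  linear_combination s ^ 2 * sin_sq_add_cos_sq (s * (x - m))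

theorem mul_sub_le_pi_div_two_of_sq_le {s a b : ℝ} (hab : a < b)
    (h : s ^ 2 ≤ π ^ 2 / (4 * (b - a) ^ 2)) : s * (b - a) ≤ π / 2 := by
  rw [le_div_iff₀ (by nlinarith)] at h
  nlinarith [pi_pos]

section QuadraticForm

variable {a b M : ℝ} {f f' : ℝ → ℝ}

theorem integral_eq_sub_of_hasDerivWithinAt_Icc (hab : a ≤ b)
    (hf : ∀ x ∈ Icc a b, HasDerivWithinAt f (f' x) (Icc a b) x)
    (hf' : ContinuousOn f' (Icc a b)) :
    ∫ x in a..b, f' x = f b - f a :=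
  intervalIntegral.integral_eq_sub_of_hasDerivAt_of_le hab
    (fun x hx => (hf x hx).continuousWithinAt)
    (fun x hx => (hf x (Ioo_subset_Icc_self hx)).hasDerivAt (Icc_mem_nhds hx.1 hx.2))
    (hf'.intervalIntegrable_of_Icc hab)

theorem integral_sq_sub_mul_integral_sq (hab : a ≤ b) (hf : ContinuousOn f (Icc a b))
    (hf' : ContinuousOn f' (Icc a b)) :
    (∫ x in a..b, f' x ^ 2) - M * ∫ x in a..b, f x ^ 2 =
      ∫ x in a..b, (f' x ^ 2 - M * f x ^ 2) := by
  rw [intervalIntegral.integral_sub (f := fun x => f' x ^ 2) (g := fun x => M * f x ^ 2)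
    (ContinuousOn.intervalIntegrable_of_Icc hab (by fun_prop))
    (ContinuousOn.intervalIntegrable_of_Icc hab (by fun_prop)), intervalIntegral.integral_const_mul]

theorem integral_sq_deriv_sub_sq_eq_of_riccati {g : ℝ → ℝ} (hab : a ≤ b)
    (hf : ∀ x ∈ Icc a b, HasDerivWithinAt f (f' x) (Icc a b) x) (hf' : ContinuousOn f' (Icc a b))
    (hg : ∀ x ∈ Icc a b, HasDerivWithinAt g (-(M + g x ^ 2)) (Icc a b) x) :
    ∫ x in a..b, (f' x ^ 2 - M * f x ^ 2) =
      (∫ x in a..b, (f' x - g x * f x) ^ 2) + (g b * f b ^ 2 - g a * f a ^ 2) := by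
  have hfc : ContinuousOn f (Icc a b) := fun x hx => (hf x hx).continuousWithinAt
  have hgc : ContinuousOn g (Icc a b) := fun x hx => (hg x hx).continuousWithinAt
  have hF : ∀ x ∈ Icc a b, HasDerivWithinAt (fun y => g y * f y ^ 2)
      (-(M + g x ^ 2) * f x ^ 2 + g x * (2 * f x * f' x)) (Icc a b) x := fun x hx =>
    ((hg x hx).fun_mul ((hf x hx).fun_pow 2)).congr_deriv (by norm_num)
  rw [← integral_eq_sub_of_hasDerivWithinAt_Icc hab hF (by fun_prop),
    ← intervalIntegral.integral_add (ContinuousOn.intervalIntegrable_of_Icc hab (by fun_prop))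
      (ContinuousOn.intervalIntegrable_of_Icc hab (by fun_prop))]
  exact intervalIntegral.integral_congr fun x _ => by ring

theorem integral_sq_deriv_sub_sq_nonneg (hab : a ≤ b) {s : ℝ} (hs : 0 ≤ s)
    (hsπ : s * (b - a) < π) (hf : ∀ x ∈ Icc a b, HasDerivWithinAt f (f' x) (Icc a b) x)
    (hf' : ContinuousOn f' (Icc a b)) (ha : f a = 0) (hb : f b = 0) :
    0 ≤ ∫ x in a..b, (f' x ^ 2 - s ^ 2 * f x ^ 2) := by
  have hcos : ∀ x ∈ Icc a b, cos (s * (x - (a + b) / 2)) ≠ 0 := fun x hx =>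
    (cos_pos_of_mem_Ioo ⟨by nlinarith [mul_nonneg hs (sub_nonneg.2 hx.1)],
      by nlinarith [mul_nonneg hs (sub_nonneg.2 hx.2)]⟩).ne'
  rw [integral_sq_deriv_sub_sq_eq_of_riccati hab hf hf'
    fun x hx => (hasDerivAt_neg_mul_tan (hcos x hx)).hasDerivWithinAt, ha, hb]
  simpa using intervalIntegral.integral_nonneg hab fun x _ => sq_nonneg _

theorem eqOn_zero_of_integral_sq_deriv_sub_sq_nonpos (hab : a < b) {s : ℝ} (hs : 0 ≤ s)
    (hsπ : s * (b - a) < π) (hf : ∀ x ∈ Icc a b, HasDerivWithinAt f (f' x) (Icc a b) x)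
    (hf' : ContinuousOn f' (Icc a b)) (ha : f a = 0) (hb : f b = 0)
    (h : ∫ x in a..b, (f' x ^ 2 - s ^ 2 * f x ^ 2) ≤ 0) : EqOn f 0 (Icc a b) := by
  have hfc : ContinuousOn f (Icc a b) := fun x hx => (hf x hx).continuousWithinAt
  obtain ⟨t, hst, htπ⟩ := exists_between ((lt_div_iff₀ (sub_pos.2 hab)).2 hsπ)
  rw [lt_div_iff₀ (sub_pos.2 hab)] at htπ
  have ht := integral_sq_deriv_sub_sq_nonneg hab.le (hs.trans hst.le) htπ hf hf' ha hb
  rw [← integral_sq_sub_mul_integral_sq hab.le hfc hf'] at h ht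
  have hst2 : s ^ 2 < t ^ 2 := pow_lt_pow_left₀ hst hs two_ne_zero
  have hsq : ∫ x in a..b, f x ^ 2 ≤ 0 := by
    by_contra! hpos
    nlinarith [mul_pos (sub_pos.2 hst2) hpos]
  intro x hx
  by_contra hfx
  exact hsq.not_gt <| intervalIntegral.integral_pos (f := fun y => f y ^ 2) hab (hfc.pow 2)
    (fun y _ => sq_nonneg (f y)) ⟨x, hx, sq_pos_of_ne_zero hfx⟩

theorem integral_sq_deriv_sub_sq_eq_zero_of_eqOn_zero (hab : a < b)
    (hf : ∀ x ∈ Icc a b, HasDerivWithinAt f (f' x) (Icc a b) x) (hf0 : EqOn f 0 (Icc a b)) :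
    ∫ x in a..b, (f' x ^ 2 - M * f x ^ 2) = 0 := by
  have hf'0 : EqOn f' 0 (Icc a b) := fun x hx =>
    (uniqueDiffOn_Icc hab x hx).eq_deriv _ (hf x hx)
      ((hasDerivWithinAt_const x _ 0).congr hf0 (hf0 hx))
  rw [intervalIntegral.integral_congr (g := fun _ => 0) fun x hx => ?_,
    intervalIntegral.integral_zero]
  rw [uIcc_of_le hab.le] at hx
  simp [hf0 hx, hf'0 hx]

theorem integral_sq_deriv_sub_sq_eq_add_of_eigen {u v w w' : ℝ → ℝ} (hab : a ≤ b)
    (hu : ∀ x ∈ Icc a b, HasDerivWithinAt u (v x) (Icc a b) x) (hv : ContinuousOn v (Icc a b))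
    (hw : ∀ x ∈ Icc a b, HasDerivWithinAt w (w' x) (Icc a b) x)
    (hw' : ∀ x ∈ Icc a b, HasDerivWithinAt w' (-(M * w x)) (Icc a b) x)
    (ha : u a = w a) (hb : u b = w b) :
    ∫ x in a..b, (v x ^ 2 - M * u x ^ 2) =
      (∫ x in a..b, (w' x ^ 2 - M * w x ^ 2)) +
        ∫ x in a..b, ((v x - w' x) ^ 2 - M * (u x - w x) ^ 2) := by
  have huc : ContinuousOn u (Icc a b) := fun x hx => (hu x hx).continuousWithinAt
  have hwc : ContinuousOn w (Icc a b) := fun x hx => (hw x hx).continuousWithinAt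
  have hwc' : ContinuousOn w' (Icc a b) := fun x hx => (hw' x hx).continuousWithinAt
  have hcross : ∫ x in a..b, (-(M * w x) * (u x - w x) + w' x * (v x - w' x)) = 0 := by
    rw [integral_eq_sub_of_hasDerivWithinAt_Icc hab
      (fun x hx => (hw' x hx).fun_mul ((hu x hx).fun_sub (hw x hx))) (by fun_prop), ha, hb]
    ring
  calc ∫ x in a..b, (v x ^ 2 - M * u x ^ 2)
      = ∫ x in a..b, ((w' x ^ 2 - M * w x ^ 2) + ((v x - w' x) ^ 2 - M * (u x - w x) ^ 2)) +
          2 * (-(M * w x) * (u x - w x) + w' x * (v x - w' x)) :=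
        intervalIntegral.integral_congr fun x _ => by ring
    _ = _ := by
      rw [intervalIntegral.integral_add (ContinuousOn.intervalIntegrable_of_Icc hab (by fun_prop))
          (ContinuousOn.intervalIntegrable_of_Icc hab (by fun_prop)),
        intervalIntegral.integral_add (ContinuousOn.intervalIntegrable_of_Icc hab (by fun_prop))
          (ContinuousOn.intervalIntegrable_of_Icc hab (by fun_prop)),
        intervalIntegral.integral_const_mul, hcross, mul_zero, add_zero]

end QuadraticForm

section SineExtremal

noncomputable def sineExtremal (s a b c x : ℝ) : ℝ := c * sin (s * (x - a)) / sin (s * (b - a))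

noncomputable def sineExtremalDeriv (s a b c x : ℝ) : ℝ :=
  c * (s * cos (s * (x - a))) / sin (s * (b - a))

variable (s a b c x : ℝ)

theorem hasDerivAt_sineExtremal :
    HasDerivAt (sineExtremal s a b c) (sineExtremalDeriv s a b c x) x :=
  ((hasDerivAt_mul_sub s a x).sin.const_mul c |>.div_const _).congr_deriv (by
    simp only [sineExtremalDeriv]; ring)

theorem hasDerivAt_sineExtremalDeriv :
    HasDerivAt (sineExtremalDeriv s a b c) (-(s ^ 2 * sineExtremal s a b c x)) x :=
  (((hasDerivAt_mul_sub s a x).cos.const_mul s).const_mul c |>.div_const _).congr_deriv (by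
    simp only [sineExtremal]; ring)

theorem sineExtremal_left : sineExtremal s a b c a = 0 := by simp [sineExtremal]

theorem sineExtremal_right (hsin : sin (s * (b - a)) ≠ 0) : sineExtremal s a b c b = c := by
  simp [sineExtremal, hsin]

theorem integral_sq_sineExtremalDeriv_sub_sq (hsin : sin (s * (b - a)) ≠ 0) :
    ∫ x in a..b, (sineExtremalDeriv s a b c x ^ 2 - s ^ 2 * sineExtremal s a b c x ^ 2) =
      s * cot (s * (b - a)) * c ^ 2 := by
  have hF : ∀ x, HasDerivAt
      (fun y => c ^ 2 * s * (sin (s * (y - a)) * cos (s * (y - a))) / sin (s * (b - a)) ^ 2)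
      (sineExtremalDeriv s a b c x ^ 2 - s ^ 2 * sineExtremal s a b c x ^ 2) x := fun x =>
    ((((hasDerivAt_mul_sub s a x).sin.mul (hasDerivAt_mul_sub s a x).cos).const_mul
      (c ^ 2 * s)).div_const _).congr_deriv (by simp only [sineExtremal, sineExtremalDeriv]; ring)
  rw [intervalIntegral.integral_eq_sub_of_hasDerivAt (fun x _ => hF x)
    (Continuous.intervalIntegrable (by simp only [sineExtremal, sineExtremalDeriv]; fun_prop) a b),
    sub_self, mul_zero, sin_zero, zero_mul, mul_zero, zero_div, sub_zero, cot_eq_cos_div_sin]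
  field_simp

end SineExtremal

theorem integral_sq_sub_mul_integral_sq_eq_cot_add {a b s : ℝ} {u v : ℝ → ℝ} (hab : a ≤ b)
    (hsin : sin (s * (b - a)) ≠ 0) (hu : ∀ x ∈ Icc a b, HasDerivWithinAt u (v x) (Icc a b) x)
    (hv : ContinuousOn v (Icc a b)) (hua : u a = 0) :
    (∫ x in a..b, v x ^ 2) - s ^ 2 * ∫ x in a..b, u x ^ 2 =
      s * cot (s * (b - a)) * u b ^ 2 +
        ∫ x in a..b, ((v x - sineExtremalDeriv s a b (u b) x) ^ 2 -
          s ^ 2 * (u x - sineExtremal s a b (u b) x) ^ 2) := by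
  rw [integral_sq_sub_mul_integral_sq hab (fun x hx => (hu x hx).continuousWithinAt) hv,
    integral_sq_deriv_sub_sq_eq_add_of_eigen hab hu hv
      (fun x _ => (hasDerivAt_sineExtremal s a b _ x).hasDerivWithinAt)
      (fun x _ => (hasDerivAt_sineExtremalDeriv s a b _ x).hasDerivWithinAt)
      (hua.trans (sineExtremal_left s a b _).symm) (sineExtremal_right s a b _ hsin).symm,
    integral_sq_sineExtremalDeriv_sub_sq s a b _ hsin]

theorem stmt3 (a b M : ℝ) (hab : a < b) (hM : 0 < M)
    (hM2 : M ≤ Real.pi ^ 2 / (4 * (b - a) ^ 2))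
    (u v : ℝ → ℝ)
    (hderiv : ∀ x ∈ Set.Icc a b, HasDerivWithinAt u (v x) (Set.Icc a b) x)
    (hcont : ContinuousOn v (Set.Icc a b))
    (hua : u a = 0) (hub : u b ≠ 0) :
    Real.sqrt M * Real.cot (Real.sqrt M * (b - a)) * u b ^ 2 ≤
      (∫ x in a..b, v x ^ 2) - M * ∫ x in a..b, u x ^ 2 ∧
    ((∫ x in a..b, v x ^ 2) - M * ∫ x in a..b, u x ^ 2 =
        Real.sqrt M * Real.cot (Real.sqrt M * (b - a)) * u b ^ 2 ↔
      ∃ k : ℝ, k ≠ 0 ∧ ∀ x ∈ Set.Icc a b,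
        u x = k * Real.sin (Real.sqrt M * (x - a)) / Real.sin (Real.sqrt M * (b - a))) := by
  obtain ⟨s, hs, rfl⟩ : ∃ s, 0 < s ∧ s ^ 2 = M := ⟨√M, sqrt_pos.2 hM, sq_sqrt hM.le⟩
  have hθπ : s * (b - a) < π := by linarith [mul_sub_le_pi_div_two_of_sq_le hab hM2, pi_pos]
  have hsin : sin (s * (b - a)) ≠ 0 :=
    (sin_pos_of_pos_of_lt_pi (mul_pos hs (sub_pos.2 hab)) hθπ).ne'
  rw [sqrt_sq hs.le, integral_sq_sub_mul_integral_sq_eq_cot_add hab.le hsin hderiv hcont hua]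
  set w := sineExtremal s a b (u b)
  set w' := sineExtremalDeriv s a b (u b)
  have hz : ∀ x ∈ Icc a b, HasDerivWithinAt (fun x => u x - w x) (v x - w' x) (Icc a b) x :=
    fun x hx => (hderiv x hx).sub (hasDerivAt_sineExtremal s a b _ x).hasDerivWithinAt
  have hz' : ContinuousOn (fun x => v x - w' x) (Icc a b) := hcont.sub fun x _ =>
    (hasDerivAt_sineExtremalDeriv s a b _ x).continuousAt.continuousWithinAt
  have hza : u a - w a = 0 := sub_eq_zero.2 (hua.trans (sineExtremal_left s a b _).symm)
  have hzb : u b - w b = 0 := sub_eq_zero.2 (sineExtremal_right s a b _ hsin).symm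
  refine ⟨?_, fun heq => ⟨u b, hub, fun x hx => ?_⟩, fun ⟨k, _, hk⟩ => ?_⟩
  · linarith [integral_sq_deriv_sub_sq_nonneg hab.le hs.le hθπ hz hz' hza hzb]
  · exact eq_of_sub_eq_zero (eqOn_zero_of_integral_sq_deriv_sub_sq_nonpos hab hs.le hθπ hz hz'
      hza hzb (by linarith) hx)
  · have hkb : k = u b := by
      rw [hk b ⟨hab.le, le_rfl⟩, mul_div_assoc, div_self hsin, mul_one]
    have hz0 : EqOn (fun x => u x - w x) 0 (Icc a b) := fun x hx => by
      simp only [Pi.zero_apply, hk x hx, hkb, sub_eq_zero]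
      rfl
    rw [integral_sq_deriv_sub_sq_eq_zero_of_eqOn_zero hab hz hz0, add_zero]
end

section
/- Let α ∈ (0, π/2) and x₀ ∈ (0, π) be given, and define a_{α,x₀} : (0,π) → ℝ by a_{α,x₀}(x) = α²/x₀² for x ∈ (0,x₀) and a_{α,x₀}(x) = α²/(π−x₀)² for x ∈ (x₀,π). Then the antiperiodic boundary value problem u''(x) + a_{α,x₀}(x)u(x) = 0 on (0,π), u(0) + u(π) = 0, u'(0) + u'(π) = 0, has a nontrivial solution if and only if x₀ = (π/2)(1 − cos α) or x₀ = (π/2)(1 + cos α). -/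
open MeasureTheory Set Real

/-- The piecewise constant coefficient `a_{α,x₀}`. -/
noncomputable def aPiece (α x₀ : ℝ) : ℝ → ℝ := fun x =>
  if x < x₀ then α ^ 2 / x₀ ^ 2 else α ^ 2 / (Real.pi - x₀) ^ 2

/-!
On `(0, x₀)` and on `(x₀, π)` the coefficient is a constant `k²`, with `k₁ = α / x₀` and
`k₂ = α / (π - x₀)`, so on each piece the state `(u, u')` is moved by an explicit transfer matrix,
through the same phase `k₁ x₀ = k₂ (π - x₀) = α`. Antiperiodic solutions are therefore the kernel
vectors of `M + 1`, where `M` is the product of the two transfer matrices, and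
`det (M + 1) · k₁ k₂ = cos² α (k₁ + k₂)² - (k₁ - k₂)²`, which vanishes exactly when
`π cos α = ± (π - 2 x₀)`.
-/

open Matrix

/-- Solutions of `u'' + k² u = 0` satisfy `(u, u') (c + θ / k) = transfer k θ *ᵥ (u, u') c`. -/
noncomputable def transfer (k θ : ℝ) : Matrix (Fin 2) (Fin 2) ℝ :=
  !![cos θ, sin θ / k; -(k * sin θ), cos θ]

def oscillatorMatrix (k : ℝ) : Matrix (Fin 2) (Fin 2) ℝ :=
  !![0, 1; -k ^ 2, 0]

lemma oscillatorMatrix_mulVec (k : ℝ) (w : Fin 2 → ℝ) :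
    oscillatorMatrix k *ᵥ w = ![w 1, -(k ^ 2 * w 0)] := by
  ext i; fin_cases i <;> simp [oscillatorMatrix, mulVec, dotProduct, Fin.sum_univ_two]

@[simp]
lemma transfer_zero (k : ℝ) : transfer k 0 = 1 := by
  ext i j; fin_cases i <;> fin_cases j <;> simp [transfer]

lemma hasDerivAt_transfer_mulVec {k : ℝ} (hk : k ≠ 0) (c : ℝ) (w : Fin 2 → ℝ) (x : ℝ) :
    HasDerivAt (fun y => transfer k (k * (y - c)) *ᵥ w)
      (oscillatorMatrix k *ᵥ (transfer k (k * (x - c)) *ᵥ w)) x := by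
  have hθ : HasDerivAt (fun y => k * (y - c)) k x := by
    simpa using ((hasDerivAt_id x).sub_const c).const_mul k
  have hcos := (hasDerivAt_cos _).comp x hθ
  have hsin := (hasDerivAt_sin _).comp x hθ
  refine hasDerivAt_pi.2 fun i => ?_
  fin_cases i
  · convert (hcos.mul_const (w 0)).add (hsin.div_const k |>.mul_const (w 1)) using 1
    · ext y; simp [transfer, mulVec, dotProduct, Fin.sum_univ_two]
    · simp [transfer, oscillatorMatrix, mulVec, dotProduct, Fin.sum_univ_two]
      field_simp
  · convert ((hsin.const_mul k).neg.mul_const (w 0)).add (hcos.mul_const (w 1)) using 1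
    · ext y; simp [transfer, mulVec, dotProduct, Fin.sum_univ_two]
    · simp [transfer, oscillatorMatrix, mulVec, dotProduct, Fin.sum_univ_two]
      field_simp
      ring

lemma det_transfer_mul_transfer_add_one {k₁ k₂ : ℝ} (hk₁ : k₁ ≠ 0) (hk₂ : k₂ ≠ 0) (θ : ℝ) :
    (transfer k₂ θ * transfer k₁ θ + 1).det * (k₁ * k₂) =
      (cos θ * (k₁ + k₂)) ^ 2 - (k₁ - k₂) ^ 2 := by
  simp only [transfer, det_fin_two, Matrix.add_apply, Matrix.mul_apply, Fin.sum_univ_two,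
    of_apply, cons_val', cons_val_zero, cons_val_one, empty_val', cons_val_fin_one, one_apply_eq,
    one_apply_ne (show (0 : Fin 2) ≠ 1 by decide), one_apply_ne (show (1 : Fin 2) ≠ 0 by decide)]
  field_simp
  linear_combination
    (-(k₁ - k₂) ^ 2 + (sin θ ^ 2 + cos θ ^ 2 - 1) * k₁ * k₂) * sin_sq_add_cos_sq θ

section IsSolOn

variable {a b u v : ℝ → ℝ} {c d e : ℝ}

lemma IsSolOn.continuousOn_s13 (h : IsSolOn a u v c d) : ContinuousOn u (Icc c d) :=
  fun x hx => (h.1 x hx).continuousWithinAt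

lemma IsSolOn.hasDerivWithinAt_deriv (ha : ContinuousOn a (Icc c d)) (h : IsSolOn a u v c d)
    {x : ℝ} (hx : x ∈ Icc c d) : HasDerivWithinAt v (-(a x * u x)) (Icc c d) x := by
  have hau : ContinuousOn (fun t => a t * u t) (Icc c d) := ha.mul h.continuousOn_s13
  have : Fact (x ∈ Icc c d) := ⟨hx⟩
  have hint : HasDerivWithinAt (fun y => ∫ t in c..y, a t * u t) (a x * u x) (Icc c d) x :=
    intervalIntegral.integral_hasDerivWithinAt_right
      ((hau.mono (Icc_subset_Icc_right hx.2)).intervalIntegrable_of_Icc hx.1)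
      (hau.stronglyMeasurableAtFilter_nhdsWithin measurableSet_Icc x) (hau x hx)
  exact (hint.const_sub (v c)).congr (fun y hy => h.2 y hy) (h.2 x hx)

lemma isSolOn_const_sq_iff {k : ℝ} (hk : k ≠ 0) :
    IsSolOn (fun _ => k ^ 2) u v c d ↔
      ∀ x ∈ Icc c d, ![u x, v x] = transfer k (k * (x - c)) *ᵥ ![u c, v c] := by
  set g : ℝ → Fin 2 → ℝ := fun x => transfer k (k * (x - c)) *ᵥ ![u c, v c]
  have hg := hasDerivAt_transfer_mulVec hk c ![u c, v c]
  constructor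
  · intro h
    have hstate : ∀ x ∈ Ico c d,
        HasDerivWithinAt (fun y => ![u y, v y]) (oscillatorMatrix k *ᵥ ![u x, v x]) (Ici x) x := by
      intro x hx
      refine (hasDerivWithinAt_pi.2 (Fin.forall_fin_two.2 ⟨?_, ?_⟩)).mono_of_mem_nhdsWithin
        (Icc_mem_nhdsGE_of_mem hx)
      · simpa only [oscillatorMatrix_mulVec, cons_val_zero, cons_val_one]
          using h.1 x (Ico_subset_Icc_self hx)
      · simpa only [oscillatorMatrix_mulVec, cons_val_zero, cons_val_one]
          using h.hasDerivWithinAt_deriv continuousOn_const (Ico_subset_Icc_self hx)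
    have hcont : ContinuousOn (fun y => ![u y, v y]) (Icc c d) :=
      continuousOn_pi.2 (Fin.forall_fin_two.2 ⟨by simpa using h.continuousOn_s13,
        fun x hx => by
          simpa using (h.hasDerivWithinAt_deriv continuousOn_const hx).continuousWithinAt⟩)
    refine ODE_solution_unique (v := fun _ w => oscillatorMatrix k *ᵥ w)
      (fun _ => (mulVecLin (oscillatorMatrix k)).toContinuousLinearMap.lipschitz) hcont hstate
      (fun x _ => (hg x).continuousAt.continuousWithinAt) (fun x _ => (hg x).hasDerivWithinAt) ?_
    simp
  · intro h
    have hu : ∀ x ∈ Icc c d, u x = g x 0 := fun x hx => congrFun (h x hx) 0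
    have hv : ∀ x ∈ Icc c d, v x = g x 1 := fun x hx => congrFun (h x hx) 1
    have hg₀ : ∀ x, HasDerivAt (fun y => g y 0) (g x 1) x := fun x => by
      simpa only [oscillatorMatrix_mulVec, cons_val_zero, cons_val_one]
        using hasDerivAt_pi.1 (hg x) 0
    have hg₁ : ∀ x, HasDerivAt (fun y => -g y 1) (k ^ 2 * g x 0) x := fun x => by
      simpa only [oscillatorMatrix_mulVec, cons_val_zero, cons_val_one, neg_neg]
        using (hasDerivAt_pi.1 (hg x) 1).fun_neg
    refine ⟨fun x hx => hv x hx ▸ (hg₀ x).hasDerivWithinAt.congr hu (hu x hx), fun x hx => ?_⟩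
    have hc : c ∈ Icc c d := ⟨le_rfl, hx.1.trans hx.2⟩
    have hsub : uIcc c x ⊆ Icc c d := by rw [uIcc_of_le hx.1]; exact Icc_subset_Icc_right hx.2
    have hint : IntervalIntegrable (fun t => k ^ 2 * g t 0) volume c x :=
      ((continuous_iff_continuousAt.2 fun t => (hg₀ t).continuousAt).const_mul _)
        |>.intervalIntegrable _ _
    rw [intervalIntegral.integral_congr (g := fun t => k ^ 2 * g t 0)
        fun t ht => by simp [hu t (hsub ht)],
      intervalIntegral.integral_eq_sub_of_hasDerivAt (fun t _ => hg₁ t) hint, hv x hx, hv c hc]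
    ring

lemma isSolOn_congr_coeff (h : EqOn a b (Ioo c d)) : IsSolOn a u v c d ↔ IsSolOn b u v c d := by
  have key : ∀ x ∈ Icc c d, ∫ t in c..x, a t * u t = ∫ t in c..x, b t * u t := fun x hx =>
    intervalIntegral.integral_congr_uIoo fun t ht => by
      rw [uIoo_of_le hx.1] at ht
      simp only [h ⟨ht.1, ht.2.trans_le hx.2⟩]
  unfold IsSolOn
  exact and_congr_right fun _ => forall₂_congr fun x hx => by rw [key x hx]

lemma IsSolOn.exists_ne_zero (hcd : c < d) (h : IsSolOn a u v c d) (hw : ![u c, v c] ≠ 0) :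
    ∃ x ∈ Icc c d, u x ≠ 0 := by
  by_contra! hu
  have hc : c ∈ Icc c d := left_mem_Icc.2 hcd.le
  have hvc : v c = 0 := (uniqueDiffOn_Icc hcd c hc).eq_deriv _ (h.1 c hc)
    ((hasDerivWithinAt_const c _ 0).congr hu (hu c hc))
  exact hw (by simp [hu c hc, hvc])

lemma isSolOn_iff_and_of_le (ha : IntervalIntegrable a volume c e) (hcd : c ≤ d) (hde : d ≤ e) :
    IsSolOn a u v c e ↔ IsSolOn a u v c d ∧ IsSolOn a u v d e := by
  have split : ContinuousOn u (Icc c e) → ∀ x ∈ Icc d e,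
      ∫ t in c..x, a t * u t = (∫ t in c..d, a t * u t) + ∫ t in d..x, a t * u t := by
    intro hu x hx
    have hau : IntervalIntegrable (fun t => a t * u t) volume c e :=
      ha.mul_continuousOn (by rwa [uIcc_of_le (hcd.trans hde)])
    refine (intervalIntegral.integral_add_adjacent_intervals (hau.mono_set ?_)
      (hau.mono_set ?_)).symm <;>
    · rw [uIcc_of_le (hcd.trans hde), uIcc_of_le (by linarith [hx.1])]
      first | exact Icc_subset_Icc_right hde | exact Icc_subset_Icc hcd hx.2
  constructor
  · intro h
    have hsplit := split h.continuousOn_s13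
    refine ⟨⟨fun x hx => (h.1 x ⟨hx.1, hx.2.trans hde⟩).mono (Icc_subset_Icc_right hde),
        fun x hx => h.2 x ⟨hx.1, hx.2.trans hde⟩⟩,
      ⟨fun x hx => (h.1 x ⟨hcd.trans hx.1, hx.2⟩).mono (Icc_subset_Icc_left hcd),
        fun x hx => ?_⟩⟩
    rw [h.2 x ⟨hcd.trans hx.1, hx.2⟩, h.2 d ⟨hcd, hde⟩, hsplit x hx]
    ring
  · rintro ⟨h₁, h₂⟩
    have extend : ∀ {p q : ℝ}, IsSolOn a u v p q → ∀ x, HasDerivWithinAt u (v x) (Icc p q) x := by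
      intro p q h x
      by_cases hx : x ∈ Icc p q
      · exact h.1 x hx
      · exact HasFDerivWithinAt.of_notMem_closure (by rwa [closure_Icc])
    have hderiv : ∀ x ∈ Icc c e, HasDerivWithinAt u (v x) (Icc c e) x := fun x _ => by
      rw [← Icc_union_Icc_eq_Icc hcd hde]
      exact (extend h₁ x).union (extend h₂ x)
    refine ⟨hderiv, fun x hx => ?_⟩
    rcases le_total x d with hxd | hdx
    · exact h₁.2 x ⟨hx.1, hxd⟩
    · rw [h₂.2 x ⟨hdx, hx.2⟩, h₁.2 d ⟨hcd, le_rfl⟩,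
        split (fun y hy => (hderiv y hy).continuousWithinAt) x ⟨hdx, hx.2⟩]
      ring

end IsSolOn

section aPiece

variable {α x₀ : ℝ}

lemma aPiece_eqOn_Iio : EqOn (aPiece α x₀) (fun _ => (α / x₀) ^ 2) (Iio x₀) := fun x hx => by
  simp [aPiece, show x < x₀ from hx, div_pow]

lemma aPiece_eqOn_Ici : EqOn (aPiece α x₀) (fun _ => (α / (π - x₀)) ^ 2) (Ici x₀) :=
  fun x hx => by simp [aPiece, not_lt.2 (show x₀ ≤ x from hx), div_pow]

lemma intervalIntegrable_aPiece (h₀ : 0 ≤ x₀) (hπ : x₀ ≤ π) :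
    IntervalIntegrable (aPiece α x₀) volume 0 π := by
  refine (intervalIntegrable_const.congr_uIoo (aPiece_eqOn_Iio.symm.mono ?_)).trans (b := x₀)
    (intervalIntegrable_const.congr_uIoo (aPiece_eqOn_Ici.symm.mono ?_))
  · rw [uIoo_of_le h₀]; exact Ioo_subset_Iio_self
  · rw [uIoo_of_le hπ]; exact Ioo_subset_Ioi_self.trans Ioi_subset_Ici_self

noncomputable def aPieceFlow (α x₀ x : ℝ) : Matrix (Fin 2) (Fin 2) ℝ :=
  if x ≤ x₀ then transfer (α / x₀) (α / x₀ * x)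
  else transfer (α / (π - x₀)) (α / (π - x₀) * (x - x₀)) * transfer (α / x₀) α

lemma aPieceFlow_zero (h₀ : 0 ≤ x₀) : aPieceFlow α x₀ 0 = 1 := by
  simp [aPieceFlow, h₀]

lemma aPieceFlow_pi (hπ : x₀ < π) :
    aPieceFlow α x₀ π = transfer (α / (π - x₀)) α * transfer (α / x₀) α := by
  rw [aPieceFlow, if_neg hπ.not_ge, div_mul_cancel₀ _ (sub_ne_zero.2 hπ.ne')]

lemma isSolOn_aPiece_iff {u v : ℝ → ℝ} (hα : α ≠ 0) (hx₀ : x₀ ∈ Ioo 0 π) :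
    IsSolOn (aPiece α x₀) u v 0 π ↔
      ∀ x ∈ Icc 0 π, ![u x, v x] = aPieceFlow α x₀ x *ᵥ ![u 0, v 0] := by
  obtain ⟨h₀, hπ⟩ := hx₀
  have hk₁ : α / x₀ ≠ 0 := div_ne_zero hα h₀.ne'
  have hk₂ : α / (π - x₀) ≠ 0 := div_ne_zero hα (sub_ne_zero.2 hπ.ne')
  have hphase : α / x₀ * x₀ = α := div_mul_cancel₀ _ h₀.ne'
  rw [isSolOn_iff_and_of_le (intervalIntegrable_aPiece h₀.le hπ.le) h₀.le hπ.le,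
    isSolOn_congr_coeff (aPiece_eqOn_Iio.mono Ioo_subset_Iio_self),
    isSolOn_congr_coeff (aPiece_eqOn_Ici.mono (Ioo_subset_Ioi_self.trans Ioi_subset_Ici_self)),
    isSolOn_const_sq_iff hk₁, isSolOn_const_sq_iff hk₂]
  simp only [sub_zero]
  constructor
  · rintro ⟨h₁, h₂⟩ x hx
    rcases le_or_gt x x₀ with hxx₀ | hxx₀
    · rw [aPieceFlow, if_pos hxx₀, h₁ x ⟨hx.1, hxx₀⟩]
    · rw [aPieceFlow, if_neg hxx₀.not_ge, h₂ x ⟨hxx₀.le, hx.2⟩, h₁ x₀ ⟨h₀.le, le_rfl⟩, hphase,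
        mulVec_mulVec]
  · intro h
    refine ⟨fun x hx => by rw [h x ⟨hx.1, hx.2.trans hπ.le⟩, aPieceFlow, if_pos hx.2],
      fun x hx => ?_⟩
    rw [h x ⟨h₀.le.trans hx.1, hx.2⟩, h x₀ ⟨h₀.le, hπ.le⟩, aPieceFlow, aPieceFlow, if_pos le_rfl,
      hphase, mulVec_mulVec]
    rcases hx.1.eq_or_lt with rfl | hxx₀
    · simp [hphase]
    · rw [if_neg hxx₀.not_ge]

lemma det_aPieceFlow_pi_add_one_eq_zero_iff (hα : α ≠ 0) (hx₀ : x₀ ∈ Ioo 0 π) :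
    (aPieceFlow α x₀ π + 1).det = 0 ↔
      x₀ = π / 2 * (1 - cos α) ∨ x₀ = π / 2 * (1 + cos α) := by
  obtain ⟨h₀, hπ⟩ := hx₀
  have hy₀ : π - x₀ ≠ 0 := sub_ne_zero.2 hπ.ne'
  have hk₁ : α / x₀ ≠ 0 := div_ne_zero hα h₀.ne'
  have hk₂ : α / (π - x₀) ≠ 0 := div_ne_zero hα hy₀
  have hscale : α / (x₀ * (π - x₀)) ≠ 0 := div_ne_zero hα (mul_ne_zero h₀.ne' hy₀)
  have hsum : cos α * (α / x₀ + α / (π - x₀)) = α / (x₀ * (π - x₀)) * (π * cos α) := by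
    field_simp; ring
  have hdiff : α / x₀ - α / (π - x₀) = α / (x₀ * (π - x₀)) * (π - 2 * x₀) := by
    field_simp; ring
  rw [aPieceFlow_pi hπ, ← mul_left_inj' (mul_ne_zero hk₁ hk₂),
    det_transfer_mul_transfer_add_one hk₁ hk₂, zero_mul, sub_eq_zero, hsum, hdiff,
    sq_eq_sq_iff_eq_or_eq_neg, ← mul_neg, mul_right_inj' hscale, mul_right_inj' hscale]
  refine or_congr ⟨fun h => ?_, fun h => ?_⟩ ⟨fun h => ?_, fun h => ?_⟩ <;> linarith

end aPiece

theorem stmt13 (α x₀ : ℝ) (hα : α ∈ Set.Ioo 0 (Real.pi / 2))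
    (hx₀ : x₀ ∈ Set.Ioo 0 Real.pi) :
    (∃ u v : ℝ → ℝ, IsSolOn (aPiece α x₀) u v 0 Real.pi ∧
        u 0 + u Real.pi = 0 ∧ v 0 + v Real.pi = 0 ∧
        ∃ x ∈ Set.Icc 0 Real.pi, u x ≠ 0) ↔
    (x₀ = Real.pi / 2 * (1 - Real.cos α) ∨ x₀ = Real.pi / 2 * (1 + Real.cos α)) := by
  have hα₀ : α ≠ 0 := hα.1.ne'
  rw [← det_aPieceFlow_pi_add_one_eq_zero_iff hα₀ hx₀, ← exists_mulVec_eq_zero_iff]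
  constructor
  · rintro ⟨u, v, hsol, hu, hv, x, hx, hux⟩
    have hflow := (isSolOn_aPiece_iff hα₀ hx₀).1 hsol
    refine ⟨![u 0, v 0], fun hzero => hux ?_, ?_⟩
    · simpa [hzero] using congrFun (hflow x hx) 0
    · rw [add_mulVec, one_mulVec, ← hflow π ⟨pi_pos.le, le_rfl⟩]
      ext i
      fin_cases i <;> simp <;> linarith
  · rintro ⟨w, hw, hker⟩
    set u : ℝ → ℝ := fun x => (aPieceFlow α x₀ x *ᵥ w) 0
    set v : ℝ → ℝ := fun x => (aPieceFlow α x₀ x *ᵥ w) 1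
    have hstate : ∀ x, ![u x, v x] = aPieceFlow α x₀ x *ᵥ w := fun x =>
      FinVec.etaExpand_eq (aPieceFlow α x₀ x *ᵥ w)
    have hw₀ : ![u 0, v 0] = w := by rw [hstate, aPieceFlow_zero hx₀.1.le, one_mulVec]
    have hsol : IsSolOn (aPiece α x₀) u v 0 π :=
      (isSolOn_aPiece_iff hα₀ hx₀).2 fun x _ => by rw [hstate, hw₀]
    rw [add_mulVec, one_mulVec, ← hstate, ← hw₀] at hker
    refine ⟨u, v, hsol, ?_, ?_, hsol.exists_ne_zero pi_pos (hw₀ ▸ hw)⟩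
    · simpa [add_comm] using congrFun hker 0
    · simpa [add_comm] using congrFun hker 1
end
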